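/- Assume the Setup (Section 2) with conditions (sing), (main0), (main1), and suppose (X_T, U) is an isometric asymptote of T, with U acting on K. Set δ_n = inf{‖X_T x‖/‖x‖ : 0 ≠ x ∈ H_n}. Then δ_n > 0 for all n ≥ 0 (so each X_T H_n is closed), K is the orthogonal direct sum ⊕_{n≥0} X_T H_n, U is unitary, and U|_{X_T H_n} is unitarily equivalent to U_{0n} for every n ≥ 0. -/

import Mathlib

noncomputable section
set_option linter.unusedSectionVars false
set_option maxHeartbeats 1000000
open scoped ENNReal InnerProductSpace
open ContinuousLinearMap

/-- A bounded operator `V` is an isometry. -/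
def IsIsometryOp {K : Type} [NormedAddCommGroup K] [InnerProductSpace ℂ K]
    (V : K →L[ℂ] K) : Prop :=
  ∀ x, ‖V x‖ = ‖x‖

/-- A bounded operator `V` is unitary: an isometry onto. -/
def IsUnitaryOp {K : Type} [NormedAddCommGroup K] [InnerProductSpace ℂ K]
    (V : K →L[ℂ] K) : Prop :=
  (∀ x, ‖V x‖ = ‖x‖) ∧ Function.Surjective V

/-- `(X, V)` is an isometric asymptote of `T`: `V` is an isometry, `X` intertwines `T` with `V`
and has dense range, and the pair has the universal property with respect to every pair `(Y, W)`
with `W` an isometry on a Hilbert space and `Y T = W Y`. -/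
def IsIsometricAsymptote {H : Type} [NormedAddCommGroup H] [InnerProductSpace ℂ H]
    [CompleteSpace H] (T : H →L[ℂ] H)
    (K : Type) [NormedAddCommGroup K] [InnerProductSpace ℂ K] [CompleteSpace K]
    (X : H →L[ℂ] K) (V : K →L[ℂ] K) : Prop :=
  IsIsometryOp V ∧ DenseRange X ∧ X.comp T = V.comp X ∧
    ∀ (K' : Type) [NormedAddCommGroup K'] [InnerProductSpace ℂ K'] [CompleteSpace K']
      (W : K' →L[ℂ] K') (Y : H →L[ℂ] K'), IsIsometryOp W → Y.comp T = W.comp Y →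
      ∃! Z : K →L[ℂ] K', Z.comp V = W.comp Z ∧ Y = Z.comp X

private lemma iso_inner' {E F : Type} [NormedAddCommGroup E] [InnerProductSpace ℂ E]
    [NormedAddCommGroup F] [InnerProductSpace ℂ F] (f : E →L[ℂ] F)
    (hf : ∀ x, ‖f x‖ = ‖x‖) (x y : E) : ⟪f x, f y⟫_ℂ = ⟪x, y⟫_ℂ :=
  (LinearIsometry.mk (f : E →ₗ[ℂ] F) hf).inner_map_map x y

private lemma similar_unitary_equiv {E F : Type} [NormedAddCommGroup E] [InnerProductSpace ℂ E]
    [CompleteSpace E] [NormedAddCommGroup F] [InnerProductSpace ℂ F] [CompleteSpace F]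
    (U : E →L[ℂ] E) (V : F →L[ℂ] F)
    (hUi : ∀ x, ‖U x‖ = ‖x‖) (hUs : Function.Surjective U)
    (hVi : ∀ x, ‖V x‖ = ‖x‖) (hVs : Function.Surjective V)
    (S : E ≃L[ℂ] F) (hS : ∀ x, S (U x) = V (S x)) :
    ∃ W : E ≃ₗᵢ[ℂ] F, ∀ x, W (U x) = V (W x) := by
  set Sc : E →L[ℂ] F := (S : E →L[ℂ] F) with hScdef
  set Si : F →L[ℂ] E := (S.symm : F →L[ℂ] E) with hSidef
  have hScS : ∀ x, Sc x = S x := fun x => rfl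
  have hScSi : ∀ y, Sc (Si y) = y := fun y => S.apply_symm_apply y
  have hSiSc : ∀ x, Si (Sc x) = x := fun x => S.symm_apply_apply x
  have hU1 : ∀ x, adjoint U (U x) = x := fun x => by
    refine ext_inner_right ℂ fun v => ?_
    rw [adjoint_inner_left]; exact iso_inner' U hUi x v
  have hV1 : ∀ x, adjoint V (V x) = x := fun x => by
    refine ext_inner_right ℂ fun v => ?_
    rw [adjoint_inner_left]; exact iso_inner' V hVi x v
  have hU2 : ∀ x, U (adjoint U x) = x := fun x => by
    obtain ⟨y, rfl⟩ := hUs x; rw [hU1]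
  have hadjE : ∀ x, adjoint Sc (adjoint Si x) = x := fun x => by
    refine ext_inner_right ℂ fun v => ?_
    rw [adjoint_inner_left, adjoint_inner_left, hSiSc]
  have hadjF : ∀ y, adjoint Si (adjoint Sc y) = y := fun y => by
    refine ext_inner_right ℂ fun v => ?_
    rw [adjoint_inner_left, adjoint_inner_left, hScSi]
  set A : E →L[ℂ] E := (adjoint Sc).comp Sc with hAdef
  set Ainv : E →L[ℂ] E := Si.comp (adjoint Si) with hAinvdef
  have hA1' : ∀ x, A (Ainv x) = x := fun x => by
    simp only [hAdef, hAinvdef, coe_comp', Function.comp_apply]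
    rw [hScSi, hadjE]
  have hAinv1' : ∀ x, Ainv (A x) = x := fun x => by
    simp only [hAdef, hAinvdef, coe_comp', Function.comp_apply]
    rw [hadjF, hSiSc]
  have hA' : ∀ x, A x = adjoint Sc (Sc x) := fun x => rfl
  have hScU : ∀ x, Sc (U x) = V (Sc x) := fun x => by rw [hScS, hScS, hS]
  have hstep : ∀ x, adjoint V (Sc x) = Sc (adjoint U x) := fun x => by
    conv_lhs => rw [← hU2 x]
    rw [hScU, hV1]
  have hint2 : ∀ y, adjoint Sc (V y) = U (adjoint Sc y) := fun y => by
    refine ext_inner_right ℂ fun v => ?_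
    have hR : ⟪U (adjoint Sc y), v⟫_ℂ = ⟪V y, Sc v⟫_ℂ := by
      rw [← adjoint_inner_right U, adjoint_inner_left, ← hstep v, adjoint_inner_right]
    rw [adjoint_inner_left, hR]
  have hAU : ∀ x, A (U x) = U (A x) := fun x => by
    rw [hA', hA', hScU, hint2]
  have hAinvU : ∀ x, Ainv (U x) = U (Ainv x) := fun x => by
    have h := hAU (Ainv x)
    rw [hA1'] at h
    calc Ainv (U x) = Ainv (A (U (Ainv x))) := by rw [h]
      _ = U (Ainv x) := hAinv1' _
  have hAinv_pos : (0 : E →L[ℂ] E) ≤ Ainv := by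
    rw [ContinuousLinearMap.nonneg_iff_isPositive]
    have h := (ContinuousLinearMap.isPositive_one (E := F)).conj_adjoint Si
    convert h using 1
    rw [hAinvdef]; ext x; rfl
  set R : E →L[ℂ] E := CFC.sqrt Ainv with hRdef
  have hR0 : (0 : E →L[ℂ] E) ≤ R := CFC.sqrt_nonneg Ainv
  have hRR : R * R = Ainv := CFC.sqrt_mul_sqrt_self Ainv hAinv_pos
  have hRR' : ∀ x, R (R x) = Ainv x := fun x => by
    have := congrFun (congrArg DFunLike.coe hRR) x
    simpa [mul_apply] using this
  have hRsa : adjoint R = R := by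
    have h := ((ContinuousLinearMap.nonneg_iff_isPositive R).mp hR0).isSelfAdjoint
    rw [← ContinuousLinearMap.star_eq_adjoint]; exact h
  have hRAinv' : ∀ x, R (Ainv x) = Ainv (R x) := fun x => by
    rw [← hRR' x, ← hRR' (R x)]
  have hAR' : ∀ x, A (R x) = R (A x) := fun x => by
    rw [← hAinv1' x, hRAinv', hA1', hA1']
  have hUR : ∀ x, U (R x) = R (U x) := by
    set b : E →L[ℂ] E := U * R * adjoint U with hbdef
    have hb' : ∀ x, b x = U (R (adjoint U x)) := fun x => by
      simp [hbdef, mul_apply]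
    have hb0 : (0 : E →L[ℂ] E) ≤ b := by
      simpa [ContinuousLinearMap.star_eq_adjoint] using star_right_conjugate_nonneg hR0 U
    have hbb : b * b = Ainv := by
      ext x
      show b (b x) = Ainv x
      rw [hb', hb', hU1, hRR', ← hAinvU, hU2]
    have hsqrt : R = b := by
      rw [hRdef]; exact CFC.sqrt_unique hbb hb0
    intro x
    conv_rhs => rw [hsqrt]
    rw [hb', hU1]
  set W0 : E →L[ℂ] F := Sc.comp R with hW0def
  have hW0' : ∀ x, W0 x = Sc (R x) := fun x => rfl
  have hadjW0 : ∀ y, adjoint W0 y = R (adjoint Sc y) := fun y => by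
    rw [hW0def, ContinuousLinearMap.adjoint_comp, hRsa]
    rfl
  have hWid : ∀ x, adjoint W0 (W0 x) = x := fun x => by
    rw [hadjW0, hW0', ← hA' (R x), hAR', hRR', hAinv1']
  have h1 : ∀ x, ⟪W0 x, W0 x⟫_ℂ = ⟪x, x⟫_ℂ := fun x => by
    rw [← adjoint_inner_left W0 x (W0 x), hWid]
  have hW0norm : ∀ x, ‖W0 x‖ = ‖x‖ := fun x => by
    have h2 := h1 x
    rw [inner_self_eq_norm_sq_to_K, inner_self_eq_norm_sq_to_K] at h2
    have h3 : ‖W0 x‖ ^ 2 = ‖x‖ ^ 2 := by exact_mod_cast h2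
    have h4 := congrArg Real.sqrt h3
    simpa [Real.sqrt_sq (norm_nonneg _)] using h4
  have hW0surj : Function.Surjective W0 := fun y => by
    refine ⟨R (A (Si y)), ?_⟩
    rw [hW0', hRR', hAinv1', hScSi]
  have hW0int : ∀ x, W0 (U x) = V (W0 x) := fun x => by
    rw [hW0', hW0', ← hUR, hScU]
  set li : E →ₗᵢ[ℂ] F := ⟨(W0 : E →ₗ[ℂ] F), hW0norm⟩ with hlidef
  have hlisurj : Function.Surjective li := hW0surj
  refine ⟨LinearIsometryEquiv.ofSurjective li hlisurj, fun x => ?_⟩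
  have hco : ∀ z, LinearIsometryEquiv.ofSurjective li hlisurj z = W0 z := fun z => by
    rw [LinearIsometryEquiv.coe_ofSurjective]; rfl
  rw [hco, hco, hW0int]

/-- Proposition 2.3: if `(X_T, U)` is an isometric asymptote of `T`, then each `δ_n > 0`,
`K = ⊕_n X_T H_n`, `U` is unitary, and `U|_{X_T H_n} ≅ U_{0n}`. -/
theorem isometric_asymptote_decomposition
    {H : Type} [NormedAddCommGroup H] [InnerProductSpace ℂ H] [CompleteSpace H]
    [TopologicalSpace.SeparableSpace H]
    (K0 : ℕ → Type) [∀ n, NormedAddCommGroup (K0 n)] [∀ n, InnerProductSpace ℂ (K0 n)]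
    [∀ n, CompleteSpace (K0 n)] [∀ n, TopologicalSpace.SeparableSpace (K0 n)]
    -- the unitaries `U_{0n}`, each reductive, with pairwise singular spectral measures:
    (U0 : ∀ n, K0 n →L[ℂ] K0 n)
    (hU0 : ∀ n, IsUnitaryOp (U0 n))
    (hU0red : ∀ (n) (F : Submodule ℂ (K0 n)), IsClosed (F : Set (K0 n)) →
      (∀ x ∈ F, U0 n x ∈ F) → ∀ x ∈ F, ContinuousLinearMap.adjoint (U0 n) x ∈ F)
    (hsing : ∀ n k, n ≠ k → ∀ Z : K0 n →L[ℂ] K0 k, Z.comp (U0 n) = (U0 k).comp Z → Z = 0)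
    (T : H →L[ℂ] H)
    -- the nonzero closed `T`-invariant subspaces `H_n`:
    (Hn : ℕ → Submodule ℂ H)
    (hHcl : ∀ n, IsClosed ((Hn n : Set H)))
    (hHne : ∀ n, Hn n ≠ ⊥)
    (hTH : ∀ n, ∀ x ∈ Hn n, T x ∈ Hn n)
    -- `Vn n = ⋁_{k ≠ n} H_k`:
    (Vn : ℕ → Submodule ℂ H)
    (hVn : ∀ n, Vn n = (⨆ k ∈ {k : ℕ | k ≠ n}, Hn k).topologicalClosure)
    -- (main0):
    (hmain0 : ∀ n, Hn n ⊓ Vn n = ⊥ ∧ Hn n ⊔ Vn n = ⊤)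
    -- (main1): the invertible intertwiners `X_n : H_n → K_{0n}`:
    (X0 : ∀ n, ↥(Hn n) ≃L[ℂ] K0 n)
    (hX0 : ∀ (n) (x : ↥(Hn n)), X0 n ⟨T ↑x, hTH n ↑x x.2⟩ = U0 n (X0 n x))
    -- the skew projections `Q_n` onto `H_n` along `⋁_{k ≠ n} H_k`:
    (Q : ℕ → H →L[ℂ] H)
    (hQmem : ∀ n x, Q n x ∈ Hn n)
    (hQid : ∀ n, ∀ x ∈ Hn n, Q n x = x)
    (hQker : ∀ n, ∀ x ∈ Vn n, Q n x = 0)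
    -- an isometric asymptote `(X_T, Uiso)` of `T`:
    {K : Type} [NormedAddCommGroup K] [InnerProductSpace ℂ K] [CompleteSpace K]
    (XT : H →L[ℂ] K) (Uiso : K →L[ℂ] K)
    (hasym : IsIsometricAsymptote T K XT Uiso) :
    -- `δ_n > 0` for all `n`, hence each `X_T H_n` is closed:
    (∀ n, ∃ δ : ℝ, 0 < δ ∧ ∀ x ∈ Hn n, δ * ‖x‖ ≤ ‖XT x‖) ∧
    (∀ n, IsClosed (((Hn n).map (↑XT : H →ₗ[ℂ] K) : Submodule ℂ K) : Set K)) ∧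
    -- `K` is the orthogonal direct sum `⊕_n X_T H_n`:
    (∀ n k, n ≠ k → ∀ y ∈ (Hn n).map (↑XT : H →ₗ[ℂ] K),
      ∀ z ∈ (Hn k).map (↑XT : H →ₗ[ℂ] K), ⟪y, z⟫_ℂ = 0) ∧
    (⨆ n, (Hn n).map (↑XT : H →ₗ[ℂ] K)).topologicalClosure = ⊤ ∧
    -- `U` is unitary:
    Function.Surjective Uiso ∧
    -- `U|_{X_T H_n} ≅ U_{0n}`:
    (∀ n, ∃ W : ↥((Hn n).map (↑XT : H →ₗ[ℂ] K)) ≃ₗᵢ[ℂ] K0 n,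
      ∀ (y : ↥((Hn n).map (↑XT : H →ₗ[ℂ] K)))
        (hy : Uiso ↑y ∈ (Hn n).map (↑XT : H →ₗ[ℂ] K)),
        W ⟨Uiso ↑y, hy⟩ = U0 n (W y)) := by
  obtain ⟨hUiso_iso, hXT_dense, hXTT_comp, huniv⟩ := hasym
  have hXTT : ∀ x, XT (T x) = Uiso (XT x) := fun x =>
    congrFun (congrArg DFunLike.coe hXTT_comp) x
  -- `Vn n` is `T`-invariant
  have hVnT : ∀ n, ∀ x ∈ Vn n, T x ∈ Vn n := by
    intro n x hx
    rw [hVn n] at hx ⊢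
    have hmapb : Submodule.map (T : H →ₗ[ℂ] H) (⨆ k ∈ {k : ℕ | k ≠ n}, Hn k) ≤
        ⨆ k ∈ {k : ℕ | k ≠ n}, Hn k := by
      simp only [Submodule.map_iSup]
      refine iSup₂_le fun k hk => ?_
      refine le_trans ?_ (le_biSup Hn hk)
      intro z hz
      obtain ⟨w, hw, rfl⟩ := Submodule.mem_map.mp hz
      exact hTH k w hw
    have h1 : Set.MapsTo T ((⨆ k ∈ {k : ℕ | k ≠ n}, Hn k : Submodule ℂ H) : Set H)
        ((⨆ k ∈ {k : ℕ | k ≠ n}, Hn k : Submodule ℂ H) : Set H) :=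
      fun y hy => hmapb ⟨y, hy, rfl⟩
    have h2 := h1.closure T.continuous
    simp only [← SetLike.mem_coe, Submodule.topologicalClosure_coe] at hx ⊢
    exact h2 hx
  -- skew projections commute with T
  have hsplit : ∀ n x, x - Q n x ∈ Vn n := by
    intro n x
    have hx : x ∈ Hn n ⊔ Vn n := by rw [(hmain0 n).2]; trivial
    obtain ⟨a, ha, b, hb, rfl⟩ := Submodule.mem_sup.mp hx
    have h : Q n (a + b) = a := by rw [map_add, hQid n a ha, hQker n b hb, add_zero]
    rw [h]
    simpa using hb
  have hQT : ∀ n x, Q n (T x) = T (Q n x) := by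
    intro n x
    have h0 : Q n x + (x - Q n x) = x := by abel
    have h1 : T x = T (Q n x) + T (x - Q n x) := by rw [← map_add, h0]
    rw [h1, map_add, hQid n _ (hTH n _ (hQmem n x)), hQker n _ (hVnT n _ (hsplit n x)), add_zero]
  -- lower bounds δ_n
  have hlow : ∀ n : ℕ, ∃ δ : ℝ, 0 < δ ∧ ∀ x ∈ Hn n, δ * ‖x‖ ≤ ‖XT x‖ := by
    intro n
    set Qr : H →L[ℂ] ↥(Hn n) := (Q n).codRestrict (Hn n) (hQmem n) with hQr
    set Yn : H →L[ℂ] K0 n := ((X0 n : ↥(Hn n) →L[ℂ] K0 n)).comp Qr with hYndef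
    have hYT : Yn.comp T = (U0 n).comp Yn := by
      ext x
      have h1 : Qr (T x) = ⟨T (Q n x), hTH n (Q n x) (hQmem n x)⟩ := by
        apply Subtype.ext
        simpa [hQr] using hQT n x
      simp only [hYndef, coe_comp', Function.comp_apply]
      rw [h1]
      exact hX0 n ⟨Q n x, hQmem n x⟩
    obtain ⟨Zn, ⟨hZ1, hZ2⟩, -⟩ := huniv (K0 n) (U0 n) Yn (hU0 n).1 hYT
    set Csym : K0 n →L[ℂ] ↥(Hn n) := ((X0 n).symm : K0 n →L[ℂ] ↥(Hn n)) with hCsym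
    refine ⟨(‖Csym‖ * ‖Zn‖ + 1)⁻¹, by positivity, ?_⟩
    intro x hx
    have hYx : Yn x = X0 n ⟨x, hx⟩ := by
      simp only [hYndef, coe_comp', Function.comp_apply]
      have hQrx : Qr x = (⟨x, hx⟩ : ↥(Hn n)) := Subtype.ext (by simpa [hQr] using hQid n x hx)
      rw [hQrx]
      rfl
    have hZx : X0 n ⟨x, hx⟩ = Zn (XT x) := by
      rw [← hYx, hZ2]; rfl
    have hxnorm : ‖x‖ = ‖Csym (X0 n ⟨x, hx⟩)‖ := by
      have h : Csym (X0 n ⟨x, hx⟩) = (⟨x, hx⟩ : ↥(Hn n)) := (X0 n).symm_apply_apply _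
      rw [h]
      rfl
    have hb : ‖x‖ ≤ ‖Csym‖ * ‖Zn‖ * ‖XT x‖ := by
      calc ‖x‖ = ‖Csym (X0 n ⟨x, hx⟩)‖ := hxnorm
        _ ≤ ‖Csym‖ * ‖X0 n ⟨x, hx⟩‖ := le_opNorm _ _
        _ = ‖Csym‖ * ‖Zn (XT x)‖ := by rw [hZx]
        _ ≤ ‖Csym‖ * (‖Zn‖ * ‖XT x‖) := by
            gcongr
            exact le_opNorm _ _
        _ = ‖Csym‖ * ‖Zn‖ * ‖XT x‖ := by ring
    have hpos : (0 : ℝ) < ‖Csym‖ * ‖Zn‖ + 1 := by positivity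
    rw [inv_mul_le_iff₀ hpos]
    nlinarith [norm_nonneg (XT x)]
  choose δ hδpos hδ using hlow
  -- closedness of the images
  have hMclosed : ∀ n, IsClosed (((Hn n).map (↑XT : H →ₗ[ℂ] K) : Submodule ℂ K) : Set K) := by
    intro n
    haveI : CompleteSpace ↥(Hn n) := (hHcl n).completeSpace_coe
    set f : ↥(Hn n) →L[ℂ] K := XT.comp (Hn n).subtypeL with hf
    have hbound : ∀ z : ↥(Hn n), ‖z‖ ≤ ((⟨(δ n)⁻¹, inv_nonneg.mpr (hδpos n).le⟩ : NNReal) : ℝ) * ‖f z‖ := by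
      intro z
      have h := hδ n ↑z z.2
      have hpos := hδpos n
      have h2 : ‖(z : H)‖ ≤ (δ n)⁻¹ * ‖XT ↑z‖ := by
        rw [← mul_le_mul_iff_right₀ hpos, ← mul_assoc, mul_inv_cancel₀ (ne_of_gt hpos), one_mul]
        exact h
      exact h2
    have hcl := (f.antilipschitz_of_bound hbound).isClosed_range f.uniformContinuous
    have hset : (((Hn n).map (↑XT : H →ₗ[ℂ] K) : Submodule ℂ K) : Set K) = Set.range f := by
      ext y
      constructor
      · rintro ⟨x, hx, rfl⟩
        exact ⟨⟨x, hx⟩, rfl⟩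
      · rintro ⟨z, rfl⟩
        exact ⟨↑z, z.2, rfl⟩
    rw [hset]
    exact hcl
  -- membership helpers
  have hMemM : ∀ n x, x ∈ Hn n → XT x ∈ (Hn n).map (↑XT : H →ₗ[ℂ] K) :=
    fun n x hx => ⟨x, hx, rfl⟩
  have hUM : ∀ n, ∀ y ∈ (Hn n).map (↑XT : H →ₗ[ℂ] K),
      Uiso y ∈ (Hn n).map (↑XT : H →ₗ[ℂ] K) := by
    rintro n y ⟨x, hx, rfl⟩
    refine ⟨T x, hTH n x hx, ?_⟩
    simpa using hXTT x
  have hTsurjHn : ∀ n, ∀ x ∈ Hn n, ∃ x' ∈ Hn n, T x' = x := by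
    intro n x hx
    obtain ⟨w, hw⟩ := (hU0 n).2 (X0 n ⟨x, hx⟩)
    refine ⟨↑((X0 n).symm w), ((X0 n).symm w).2, ?_⟩
    have h := hX0 n ((X0 n).symm w)
    rw [(X0 n).apply_symm_apply, hw] at h
    have h2 := (X0 n).injective h
    exact congrArg Subtype.val h2
  have hUMsurj : ∀ n, ∀ y ∈ (Hn n).map (↑XT : H →ₗ[ℂ] K),
      ∃ z ∈ (Hn n).map (↑XT : H →ₗ[ℂ] K), Uiso z = y := by
    rintro n y ⟨x, hx, rfl⟩
    obtain ⟨x', hx', hTx⟩ := hTsurjHn n x hx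
    refine ⟨XT x', ⟨x', hx', rfl⟩, ?_⟩
    show Uiso (XT x') = (↑XT : H →ₗ[ℂ] K) x
    rw [← hXTT, hTx]
    simp
  have hUinner := iso_inner' Uiso hUiso_iso
  -- the orthogonal projection intertwines
  have hPU : ∀ n, ∀ z : K,
      haveI : CompleteSpace ↥((Hn n).map (↑XT : H →ₗ[ℂ] K)) := (hMclosed n).completeSpace_coe
      ((Submodule.orthogonalProjectionOnto ((Hn n).map (↑XT : H →ₗ[ℂ] K)) (Uiso z) : K)
        = Uiso (Submodule.orthogonalProjectionOnto ((Hn n).map (↑XT : H →ₗ[ℂ] K)) z : K)) := by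
    intro n z
    haveI : CompleteSpace ↥((Hn n).map (↑XT : H →ₗ[ℂ] K)) := (hMclosed n).completeSpace_coe
    set M := (Hn n).map (↑XT : H →ₗ[ℂ] K) with hM
    set P := Submodule.orthogonalProjectionOnto M with hP
    have hz : z - ↑(P z) ∈ Mᗮ := Submodule.sub_starProjection_mem_orthogonal z
    have hperp : Uiso (z - ↑(P z)) ∈ Mᗮ := by
      rw [Submodule.mem_orthogonal]
      intro u hu
      obtain ⟨u', hu', rfl⟩ := hUMsurj n u hu
      rw [hUinner]
      exact (Submodule.mem_orthogonal M _).mp hz u' hu'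
    have hdec : Uiso z = Uiso ↑(P z) + Uiso (z - ↑(P z)) := by
      rw [← map_add]
      congr 1
      abel
    have h1 : P (Uiso z) = P (Uiso ↑(P z)) + P (Uiso (z - ↑(P z))) := by
      rw [hdec, map_add]
    have h2 : P (Uiso ↑(P z)) = ⟨Uiso ↑(P z), hUM n ↑(P z) (P z).2⟩ :=
      Submodule.orthogonalProjectionOnto_mem_subspace_eq_self (⟨Uiso ↑(P z), hUM n ↑(P z) (P z).2⟩ : ↥M)
    have h3 : P (Uiso (z - ↑(P z))) = 0 :=
      Submodule.orthogonalProjectionOnto_apply_of_mem_orthogonal hperp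
    rw [h1, h2, h3, add_zero]
  -- the similarity Se n : K0 n ≃L M n
  have hSig : ∀ n, ∃ Se : K0 n ≃L[ℂ] ↥((Hn n).map (↑XT : H →ₗ[ℂ] K)),
      ∀ v, (Se v : K) = XT ↑((X0 n).symm v) := by
    intro n
    haveI : CompleteSpace ↥((Hn n).map (↑XT : H →ₗ[ℂ] K)) := (hMclosed n).completeSpace_coe
    set Sn : K0 n →L[ℂ] K :=
      XT.comp ((Hn n).subtypeL.comp ((X0 n).symm : K0 n →L[ℂ] ↥(Hn n))) with hSn
    have hSnv : ∀ v, Sn v = XT ↑((X0 n).symm v) := fun v => rfl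
    have hSn_mem : ∀ v, Sn v ∈ (Hn n).map (↑XT : H →ₗ[ℂ] K) := fun v =>
      ⟨↑((X0 n).symm v), ((X0 n).symm v).2, rfl⟩
    set Snr : K0 n →L[ℂ] ↥((Hn n).map (↑XT : H →ₗ[ℂ] K)) :=
      Sn.codRestrict _ hSn_mem with hSnr
    have hker : LinearMap.ker (Snr : K0 n →ₗ[ℂ] ↥((Hn n).map (↑XT : H →ₗ[ℂ] K))) = ⊥ := by
      rw [LinearMap.ker_eq_bot']
      intro v hv
      have hval : Sn v = 0 := congrArg Subtype.val hv
      rw [hSnv] at hval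
      have hnz : ‖(↑((X0 n).symm v) : H)‖ = 0 := by
        have h := hδ n ↑((X0 n).symm v) ((X0 n).symm v).2
        rw [hval, norm_zero] at h
        nlinarith [norm_nonneg (↑((X0 n).symm v) : H), hδpos n]
      have hz : ((X0 n).symm v : ↥(Hn n)) = 0 := Subtype.ext (norm_eq_zero.mp hnz)
      have : v = X0 n ((X0 n).symm v) := ((X0 n).apply_symm_apply v).symm
      rw [this, hz, map_zero]
    have hrange : LinearMap.range (Snr : K0 n →ₗ[ℂ] ↥((Hn n).map (↑XT : H →ₗ[ℂ] K))) = ⊤ := by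
      rw [LinearMap.range_eq_top]
      rintro ⟨y, x, hx, rfl⟩
      refine ⟨X0 n ⟨x, hx⟩, ?_⟩
      apply Subtype.ext
      show Sn (X0 n ⟨x, hx⟩) = _
      rw [hSnv, (X0 n).symm_apply_apply]
      simp
    refine ⟨ContinuousLinearEquiv.ofBijective Snr hker hrange, fun v => ?_⟩
    rfl
  choose Se hSe using hSig
  -- Se intertwines U0 n with Uiso
  have hX0symmT : ∀ n v, (↑((X0 n).symm (U0 n v)) : H) = T ↑((X0 n).symm v) := by
    intro n v
    have h := hX0 n ((X0 n).symm v)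
    rw [(X0 n).apply_symm_apply] at h
    have h2 : (X0 n).symm (U0 n v) =
        ⟨T ↑((X0 n).symm v), hTH n ↑((X0 n).symm v) ((X0 n).symm v).2⟩ := by
      rw [← h, (X0 n).symm_apply_apply]
    rw [h2]
  have hSe_int : ∀ n v, (Se n (U0 n v) : K) = Uiso ↑(Se n v) := by
    intro n v
    rw [hSe n, hSe n, hX0symmT, hXTT]
  -- orthogonality
  have horth : ∀ n k, n ≠ k → ∀ y ∈ (Hn n).map (↑XT : H →ₗ[ℂ] K),
      ∀ z ∈ (Hn k).map (↑XT : H →ₗ[ℂ] K), ⟪y, z⟫_ℂ = 0 := by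
    intro n k hnk y hy z hz
    haveI : CompleteSpace ↥((Hn n).map (↑XT : H →ₗ[ℂ] K)) := (hMclosed n).completeSpace_coe
    set M := (Hn n).map (↑XT : H →ₗ[ℂ] K) with hM
    set P : K →L[ℂ] ↥M := Submodule.orthogonalProjectionOnto M with hP
    set Sk : K0 k →L[ℂ] K :=
      XT.comp ((Hn k).subtypeL.comp ((X0 k).symm : K0 k →L[ℂ] ↥(Hn k))) with hSk
    have hSkv : ∀ v, Sk v = XT ↑((X0 k).symm v) := fun v => rfl
    have hSk_int : ∀ v, Sk (U0 k v) = Uiso (Sk v) := by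
      intro v
      rw [hSkv, hSkv, hX0symmT, hXTT]
    set Enk : K0 k →L[ℂ] K0 n :=
      (((Se n).symm : ↥M →L[ℂ] K0 n)).comp (P.comp Sk) with hEnk
    have hEnkv : ∀ v, Enk v = (Se n).symm (P (Sk v)) := fun v => rfl
    have hSesymm_int : ∀ (m : ↥M) (hm : Uiso ↑m ∈ M),
        (Se n).symm ⟨Uiso ↑m, hm⟩ = U0 n ((Se n).symm m) := by
      intro m hm
      apply (Se n).injective
      rw [(Se n).apply_symm_apply]
      apply Subtype.ext
      rw [hSe_int n ((Se n).symm m), (Se n).apply_symm_apply]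
    have hint : Enk.comp (U0 k) = (U0 n).comp Enk := by
      ext v
      simp only [coe_comp', Function.comp_apply]
      rw [hEnkv, hEnkv, hSk_int]
      have hPu : P (Uiso (Sk v)) = ⟨Uiso ↑(P (Sk v)), hUM n ↑(P (Sk v)) (P (Sk v)).2⟩ :=
        Subtype.ext (hPU n (Sk v))
      rw [hPu, hSesymm_int]
    have hzero : Enk = 0 := hsing k n (Ne.symm hnk) Enk hint
    -- z is in the image of Sk
    obtain ⟨xz, hxz, rfl⟩ := hz
    have hzS : Sk (X0 k ⟨xz, hxz⟩) = XT xz := by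
      rw [hSkv, (X0 k).symm_apply_apply]
    have hPz : P (XT xz) = 0 := by
      have h := congrFun (congrArg DFunLike.coe hzero) (X0 k ⟨xz, hxz⟩)
      rw [hEnkv, hzS] at h
      have h2 : (Se n).symm (P (XT xz)) = 0 := h
      have h3 := congrArg (Se n) h2
      rw [(Se n).apply_symm_apply, map_zero] at h3
      exact h3
    have hzperp : (XT xz : K) ∈ Mᗮ := Submodule.orthogonalProjectionOnto_eq_zero_iff.mp hPz
    exact (Submodule.mem_orthogonal M _).mp hzperp y hy
  -- density
  have hDdense : (⨆ n, Hn n).topologicalClosure = ⊤ := by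
    rw [eq_top_iff, ← (hmain0 0).2]
    refine sup_le ?_ ?_
    · exact le_trans (le_iSup Hn 0) (Submodule.le_topologicalClosure _)
    · rw [hVn 0]
      refine Submodule.topologicalClosure_mono ?_
      exact iSup₂_le fun k _ => le_iSup Hn k
  have hMdense : (⨆ n, (Hn n).map (↑XT : H →ₗ[ℂ] K)).topologicalClosure = ⊤ := by
    rw [← Submodule.dense_iff_topologicalClosure_eq_top]
    have h5 : Set.range ⇑XT ⊆
        closure ((⨆ n, (Hn n).map (↑XT : H →ₗ[ℂ] K) : Submodule ℂ K) : Set K) := by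
      rintro _ ⟨x, rfl⟩
      have hx : x ∈ closure ((⨆ n, Hn n : Submodule ℂ H) : Set H) := by
        have : x ∈ ((⨆ n, Hn n).topologicalClosure : Set H) := by
          rw [hDdense]; trivial
        rwa [Submodule.topologicalClosure_coe] at this
      have h6 : XT x ∈ XT '' closure ((⨆ n, Hn n : Submodule ℂ H) : Set H) :=
        ⟨x, hx, rfl⟩
      have h7 := image_closure_subset_closure_image (f := ⇑XT) XT.continuous h6
      refine closure_mono ?_ h7
      intro w hw
      obtain ⟨u, hu, rfl⟩ := hw
      have : XT u ∈ Submodule.map (↑XT : H →ₗ[ℂ] K) (⨆ n, Hn n) := ⟨u, hu, rfl⟩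
      rwa [Submodule.map_iSup] at this
    intro x
    exact closure_minimal h5 isClosed_closure (hXT_dense x)
  -- surjectivity of Uiso
  have hUsurj : Function.Surjective Uiso := by
    have hiso : Isometry ⇑Uiso := AddMonoidHomClass.isometry_of_norm Uiso hUiso_iso
    have hclosed : IsClosed (Set.range ⇑Uiso) :=
      hiso.antilipschitz.isClosed_range Uiso.uniformContinuous
    have hsub : (⨆ n, (Hn n).map (↑XT : H →ₗ[ℂ] K)) ≤ LinearMap.range (↑Uiso : K →ₗ[ℂ] K) := by
      refine iSup_le fun n => ?_
      intro y hy
      obtain ⟨z, _, hz⟩ := hUMsurj n y hy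
      exact ⟨z, hz⟩
    have hcl2 : IsClosed ((LinearMap.range (↑Uiso : K →ₗ[ℂ] K) : Submodule ℂ K) : Set K) := by
      have : ((LinearMap.range (↑Uiso : K →ₗ[ℂ] K) : Submodule ℂ K) : Set K)
          = Set.range ⇑Uiso := by
        ext w; simp [LinearMap.mem_range]
      rw [this]; exact hclosed
    have htop : (⊤ : Submodule ℂ K) ≤ LinearMap.range (↑Uiso : K →ₗ[ℂ] K) := by
      rw [← hMdense]
      exact Submodule.topologicalClosure_minimal _ hsub hcl2
    intro y
    obtain ⟨x, hx⟩ := htop (Submodule.mem_top : y ∈ (⊤ : Submodule ℂ K))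
    exact ⟨x, hx⟩
  -- unitary equivalence on each piece
  have hequiv : ∀ n, ∃ W : ↥((Hn n).map (↑XT : H →ₗ[ℂ] K)) ≃ₗᵢ[ℂ] K0 n,
      ∀ (y : ↥((Hn n).map (↑XT : H →ₗ[ℂ] K)))
        (hy : Uiso ↑y ∈ (Hn n).map (↑XT : H →ₗ[ℂ] K)),
        W ⟨Uiso ↑y, hy⟩ = U0 n (W y) := by
    intro n
    haveI : CompleteSpace ↥((Hn n).map (↑XT : H →ₗ[ℂ] K)) := (hMclosed n).completeSpace_coe
    set M := (Hn n).map (↑XT : H →ₗ[ℂ] K) with hM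
    set U1 : ↥M →L[ℂ] ↥M :=
      (Uiso.comp M.subtypeL).codRestrict M (fun m => hUM n ↑m m.2) with hU1
    have hU1v : ∀ m : ↥M, (U1 m : K) = Uiso ↑m := fun m => rfl
    have hU1iso : ∀ m, ‖U1 m‖ = ‖m‖ := fun m => by
      have : ‖U1 m‖ = ‖Uiso (↑m : K)‖ := rfl
      rw [this, hUiso_iso]
      rfl
    have hU1surj : Function.Surjective U1 := by
      intro m
      obtain ⟨z, hzM, hz⟩ := hUMsurj n ↑m m.2
      exact ⟨⟨z, hzM⟩, Subtype.ext hz⟩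
    have hSeint : ∀ v, Se n (U0 n v) = U1 (Se n v) := fun v =>
      Subtype.ext (by rw [hSe_int n v]; rfl)
    obtain ⟨W', hW'⟩ := similar_unitary_equiv (U0 n) U1 (hU0 n).1 (hU0 n).2 hU1iso hU1surj
      (Se n) hSeint
    refine ⟨W'.symm, fun y hy => ?_⟩
    apply W'.injective
    rw [W'.apply_symm_apply, hW' (W'.symm y), W'.apply_symm_apply]
    apply Subtype.ext
    rfl
  exact ⟨fun n => ⟨δ n, hδpos n, hδ n⟩, hMclosed, horth, hMdense, hUsurj, hequiv⟩
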